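/- arXiv:1711.09950 — 4 statements merged into one kernel-verified Lean document; each statement's English description precedes it below -/
import Mathlib

section
/- Let A be the r×r block companion-type matrix over 2×2 complex matrices with identity blocks on the superdiagonal and a block g in the lower-left corner (all other blocks zero), regarded as a 2r×2r complex matrix. Then the characteristic polynomial of A satisfies det(A − λ·I) = det(g − λ^r·I). -/
/-!
Write `A = S ⊗ 1 + E ⊗ g` with `S` the nilpotent upper shift on `Fin r` and `E` the matrix unit
at `(r - 1, 0)`. Unitriangular row and column operations whose entries are powers of `λ` turn
`S - λ` into `S - λ^r E` and fix `E`, hence turn `A - λ` into the block cycle with corner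
`g - λ^r` without changing the determinant. A block cycle is a block diagonal matrix with
cyclically permuted block rows, so its determinant is `(-1)^(m (r - 1))` times that of its
corner, `m` being the block size; for `m = 2` the sign is `1`.
-/

open Matrix

/-- The `r × r` block matrix (with `2 × 2` complex blocks, so a `2r × 2r` complex
matrix) with identity blocks on the superdiagonal, the block `g` in the
lower-left corner, and zero blocks elsewhere. -/
def markedCycle (r : ℕ) (g : Matrix (Fin 2) (Fin 2) ℂ) :
    Matrix (Fin r × Fin 2) (Fin r × Fin 2) ℂ :=
  Matrix.of fun p q =>
    if (q.1 : ℕ) = (p.1 : ℕ) + 1 then (1 : Matrix (Fin 2) (Fin 2) ℂ) p.2 q.2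
    else if (p.1 : ℕ) = r - 1 ∧ (q.1 : ℕ) = 0 then g p.2 q.2
    else 0

open Kronecker

namespace Matrix

section UpperShift

variable {R : Type*} [NonAssocSemiring R] {m : Type*}

def upperShift (r : ℕ) : Matrix (Fin r) (Fin r) R :=
  of fun i j => if (j : ℕ) = i + 1 then 1 else 0

theorem mul_upperShift_apply {r : ℕ} [Fintype m] (A : Matrix m (Fin r) R) (i : m) (j : Fin r) :
    (A * upperShift (R := R) r) i j = if h : 0 < (j : ℕ) then A i ⟨j - 1, by omega⟩ else 0 := by
  simp only [mul_apply, upperShift, of_apply, mul_ite, mul_one, mul_zero]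
  split_ifs with h
  · rw [Finset.sum_eq_single ⟨j - 1, by omega⟩
      (fun x _ hx => if_neg fun h' => hx (Fin.ext (by simp; omega))) (by simp)]
    simp only [if_pos (by omega : (j : ℕ) = j - 1 + 1)]
  · exact Finset.sum_eq_zero fun x _ => if_neg (by omega)

theorem upperShift_mul_apply {r : ℕ} (A : Matrix (Fin r) m R) (i : Fin r) (j : m) :
    (upperShift (R := R) r * A) i j = if h : (i : ℕ) + 1 < r then A ⟨i + 1, h⟩ j else 0 := by
  simp only [mul_apply, upperShift, of_apply, ite_mul, one_mul, zero_mul]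
  split_ifs with h
  · rw [Finset.sum_eq_single ⟨i + 1, h⟩ (fun x _ hx => if_neg fun h' => hx (Fin.ext h')) (by simp)]
    simp
  · exact Finset.sum_eq_zero fun x _ => if_neg (by omega)

end UpperShift

section Sweep

variable {R : Type*} [CommRing R] {k : ℕ}

def rowSweep (r : ℕ) (μ : R) : Matrix (Fin r) (Fin r) R :=
  of fun i j => if j ≤ i then μ ^ ((i : ℕ) - j) else 0

def colSweep (r : ℕ) (μ : R) : Matrix (Fin r) (Fin r) R :=
  of fun i j => if (j : ℕ) = 0 then μ ^ (i : ℕ) else (1 : Matrix (Fin r) (Fin r) R) i j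

theorem det_rowSweep (r : ℕ) (μ : R) : (rowSweep r μ).det = 1 := by
  rw [det_of_isLowerTriangular (rowSweep r μ)
    fun i j hij => if_neg (not_le.2 (OrderDual.toDual_lt_toDual.1 hij))]
  simp [rowSweep]

theorem det_colSweep (r : ℕ) (μ : R) : (colSweep r μ).det = 1 := by
  rw [det_of_isLowerTriangular _ fun i j hij => ?_]
  · refine Finset.prod_eq_one fun i _ => ?_
    simp only [colSweep, of_apply, one_apply_eq]
    split_ifs with h <;> simp [h]
  · have hij : i < j := OrderDual.toDual_lt_toDual.1 hij
    have hj : (j : ℕ) ≠ 0 := by have := Fin.lt_def.1 hij; omega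
    simp [colSweep, hj, hij.ne]

theorem rowSweep_mul_upperShift_sub_smul (r : ℕ) (μ : R) :
    rowSweep r μ * (upperShift r - μ • 1) =
      upperShift r - of fun (i j : Fin r) => if (j : ℕ) = 0 then μ ^ ((i : ℕ) + 1) else 0 := by
  ext i j
  rw [mul_sub, Matrix.mul_smul, mul_one]
  simp only [sub_apply, smul_apply, mul_upperShift_apply, rowSweep, of_apply, smul_eq_mul,
    Fin.le_def]
  simp only [upperShift, of_apply]
  split_ifs <;> first
    | omega
    | (rw [show (i : ℕ) - (j - 1) = (i - j) + 1 by omega, pow_succ]; ring)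
    | (rw [show (i : ℕ) - (j - 1) = 0 by omega]; ring)
    | (rw [show (j : ℕ) = 0 by omega, Nat.sub_zero, pow_succ]; ring)
    | simp

theorem upperShift_sub_mul_colSweep (μ : R) :
    (upperShift (k + 1) -
        of fun (i j : Fin (k + 1)) => if (j : ℕ) = 0 then μ ^ ((i : ℕ) + 1) else 0) *
      colSweep (k + 1) μ = upperShift (k + 1) - μ ^ (k + 1) • single (Fin.last k) 0 1 := by
  ext i j
  rw [sub_mul, sub_apply, upperShift_mul_apply]
  simp only [mul_apply, of_apply, ite_mul, zero_mul, Fin.val_eq_zero_iff,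
    Finset.sum_ite_eq', Finset.mem_univ, if_true]
  simp only [colSweep, upperShift, sub_apply, of_apply, smul_apply, single_apply, Fin.ext_iff,
    Fin.val_last, Fin.val_zero, one_apply, smul_eq_mul, @eq_comm ℕ 0]
  split_ifs <;> first
    | omega
    | (rw [show (i : ℕ) + 1 = k + 1 by omega]; ring)
    | simp

theorem rowSweep_mul_single_mul_colSweep (μ : R) :
    rowSweep (k + 1) μ * single (Fin.last k) 0 1 * colSweep (k + 1) μ =
      single (Fin.last k) 0 1 := by
  ext i j
  simp [mul_apply, single_apply, ite_and, rowSweep, colSweep, one_apply]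
  by_cases hi : i = Fin.last k <;> by_cases hj : j = 0 <;> simp [hi, hj, eq_comm]

end Sweep

section BlockCycle

variable {R : Type*} [CommRing R] {n : Type*} [DecidableEq n] {k : ℕ}

theorem sub_kronecker {l m p q : Type*} (A B : Matrix l m R) (C : Matrix p q R) :
    (A - B) ⊗ₖ C = A ⊗ₖ C - B ⊗ₖ C := by
  ext; simp [sub_mul]

def blockCycle (k : ℕ) (g : Matrix n n R) : Matrix (Fin (k + 1) × n) (Fin (k + 1) × n) R :=
  upperShift (k + 1) ⊗ₖ 1 + single (Fin.last k) 0 1 ⊗ₖ g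

theorem blockCycle_eq_submatrix (h : Matrix n n R) :
    blockCycle k h = ((blockDiagonal fun j => if j = 0 then h else 1).submatrix
      (Equiv.prodComm _ _) (Equiv.prodComm _ _)).submatrix
        (Equiv.prodCongrLeft fun _ => finRotate (k + 1)) id := by
  ext ⟨i, a⟩ ⟨j, b⟩
  simp only [blockCycle, add_apply, kroneckerMap_apply, submatrix_apply, Equiv.prodCongrLeft_apply,
    Equiv.prodComm_apply, Prod.swap_prod_mk, blockDiagonal_apply, finRotate_apply, id, upperShift,
    of_apply, single_apply]
  rcases Fin.eq_castSucc_or_eq_last i with ⟨i, rfl⟩ | rfl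
  · have hi : Fin.last k ≠ i.castSucc := (Fin.castSucc_lt_last i).ne'
    have hj : (j : ℕ) = i + 1 ↔ i.succ = j := by rw [Fin.ext_iff, Fin.val_succ, eq_comm]
    simp [Fin.coeSucc_eq_succ, hi, hj]
  · have hj : (j : ℕ) ≠ k + 1 := j.isLt.ne
    simp [hj, eq_comm]

variable [Fintype n]

theorem det_blockCycle (h : Matrix n n R) :
    (blockCycle k h).det = (-1) ^ (Fintype.card n * k) * h.det := by
  rw [blockCycle_eq_submatrix, det_permute, det_submatrix_equiv_self, det_blockDiagonal,
    Equiv.Perm.sign_prodCongrLeft]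
  simp [apply_ite det, sign_finRotate]
  ring

theorem sweep_blockCycle_sub_smul (g : Matrix n n R) (μ : R) :
    (rowSweep (k + 1) μ ⊗ₖ 1) * (blockCycle k g - μ • 1) * (colSweep (k + 1) μ ⊗ₖ 1) =
      blockCycle k (g - μ ^ (k + 1) • 1) := by
  have hsplit : blockCycle k g - μ • 1 =
      (upperShift (k + 1) - μ • 1) ⊗ₖ 1 + single (Fin.last k) 0 1 ⊗ₖ g := by
    rw [blockCycle, sub_kronecker, smul_kronecker, one_kronecker_one]; abel
  rw [hsplit, mul_add, add_mul, ← mul_kronecker_mul, ← mul_kronecker_mul, ← mul_kronecker_mul,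
    ← mul_kronecker_mul, rowSweep_mul_upperShift_sub_smul, upperShift_sub_mul_colSweep,
    rowSweep_mul_single_mul_colSweep]
  ext
  simp only [blockCycle, mul_one, one_mul, add_apply, sub_apply, kroneckerMap_apply, smul_apply,
    single_apply, smul_eq_mul]
  split_ifs <;> ring

theorem det_blockCycle_sub_smul (g : Matrix n n R) (μ : R) :
    (blockCycle k g - μ • 1).det = (-1) ^ (Fintype.card n * k) * (g - μ ^ (k + 1) • 1).det := by
  have hdet := congrArg det (sweep_blockCycle_sub_smul (k := k) g μ)
  rwa [det_mul, det_mul, det_kronecker, det_kronecker, det_rowSweep, det_colSweep, det_one,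
    one_pow, one_pow, one_mul, one_mul, mul_one, det_blockCycle] at hdet

end BlockCycle

end Matrix

theorem markedCycle_eq_blockCycle (k : ℕ) (g : Matrix (Fin 2) (Fin 2) ℂ) :
    markedCycle (k + 1) g = blockCycle k g := by
  ext ⟨i, a⟩ ⟨j, b⟩
  simp only [markedCycle, blockCycle, upperShift, of_apply, Matrix.add_apply, kroneckerMap_apply,
    single_apply, Fin.ext_iff, Fin.val_last, Fin.val_zero, Nat.add_sub_cancel]
  split_ifs <;> first | omega | simp

/-- `det(A − λ·I) = det(g − λ^r·I)` for the block companion-type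
matrix `A = markedCycle r g`. -/
theorem stmt6 (r : ℕ) (hr : 1 ≤ r) (g : Matrix (Fin 2) (Fin 2) ℂ) (lam : ℂ) :
    (markedCycle r g - lam • 1).det = (g - (lam ^ r) • 1).det := by
  obtain ⟨k, rfl⟩ : ∃ k, r = k + 1 := ⟨r - 1, by omega⟩
  rw [markedCycle_eq_blockCycle, det_blockCycle_sub_smul, Fintype.card_fin, pow_mul, neg_one_sq,
    one_pow, one_mul]
end

section
/- Let g be a block-diagonal matrix whose diagonal blocks are matrices A_1, ..., A_s, where each A_i is the 2r_i × 2r_i cyclic block matrix built from a 2×2 matrix g_{α_i} (identity blocks on the superdiagonal, g_{α_i} in the lower-left corner). Then det(g − λ) = ∏_{i=1}^s det(g_{α_i} − λ^{r_i}). -/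
/-!
Block-diagonal, and more generally block-triangular, matrices have determinant the product of
the determinants of their diagonal blocks, so everything reduces to a single cyclic block
`C = S ⊗ 1 + E ⊗ g`, where `S` is the nilpotent up-shift on `Fin n` and `E` the matrix unit in
the lower-left corner. The column operations `L = (c ^ (i - j))_{j ≤ i}` followed by the cyclic
rotation `P` of the rows turn `c - S` and `E` into upper triangular scalar matrices with
diagonals `(c ^ n, -1, …, -1)` and `(1, 0, …, 0)`. Hence `(P ⊗ 1) (c - C) (L ⊗ 1)` is block upper
triangular with diagonal blocks `c ^ n - g, -1, …, -1`, and `det (c - C) = det (c ^ n - g)`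
because the signs contributed by `P` and by the blocks `-1` agree. For `2 × 2` blocks,
`det (C - c) = det (c - C)`.
-/

open Matrix

open scoped Kronecker

variable {R : Type*} [CommRing R]

theorem finRotate_symm_zero (m : ℕ) : (finRotate (m + 1)).symm 0 = Fin.last m := by
  rw [Equiv.symm_apply_eq, finRotate_last]

theorem finRotate_symm_val {m : ℕ} {i : Fin (m + 1)} (h : i ≠ 0) :
    ((finRotate (m + 1)).symm i : ℕ) = i - 1 := by
  rw [finRotate_symm_apply, Fin.coe_sub_one, if_neg h]

namespace Matrix

theorem det_of_blockTriangular_sigma_fst {α : Type*} [Fintype α] [LinearOrder α]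
    {m : α → Type*} [∀ a, Fintype (m a)] [∀ a, DecidableEq (m a)]
    {M : Matrix (Σ a, m a) (Σ a, m a) R} (hM : M.BlockTriangular Sigma.fst) :
    M.det = ∏ a, (of fun i j : m a => M ⟨a, i⟩ ⟨a, j⟩).det := by
  rw [hM.det_fintype]
  refine Finset.prod_congr rfl fun a _ => ?_
  rw [← det_submatrix_equiv_self (Equiv.sigmaSubtype a).symm]
  rfl

theorem det_of_blockTriangular_fst {α ι : Type*} [Fintype α] [LinearOrder α]
    [Fintype ι] [DecidableEq ι] {M : Matrix (α × ι) (α × ι) R}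
    (hM : M.BlockTriangular Prod.fst) :
    M.det = ∏ a, (of fun i j : ι => M (a, i) (a, j)).det := by
  rw [← det_submatrix_equiv_self (Equiv.sigmaEquivProd α ι)]
  exact det_of_blockTriangular_sigma_fst hM.submatrix

theorem det_blockDiagonal' {α : Type*} [Fintype α] [DecidableEq α]
    {m : α → Type*} [∀ a, Fintype (m a)] [∀ a, DecidableEq (m a)]
    (M : ∀ a, Matrix (m a) (m a) R) :
    (blockDiagonal' M).det = ∏ a, (M a).det := by
  let : LinearOrder α := LinearOrder.lift' _ (Fintype.equivFin α).injective
  convert det_of_blockTriangular_sigma_fst (blockTriangular_blockDiagonal' M) using 3 with a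
  ext i j
  simp

theorem IsUpperTriangular.kronecker_blockTriangular {α ι : Type*} [LT α]
    {W : Matrix α α R} (hW : W.IsUpperTriangular) (P : Matrix ι ι R) :
    (W ⊗ₖ P).BlockTriangular Prod.fst := fun i j h => by
  simp [hW h]

theorem det_kronecker_sub_kronecker_of_isUpperTriangular {α ι : Type*} [Fintype α]
    [LinearOrder α] [Fintype ι] [DecidableEq ι] {W V : Matrix α α R}
    (hW : W.IsUpperTriangular) (hV : V.IsUpperTriangular) (P Q : Matrix ι ι R) :
    (W ⊗ₖ P - V ⊗ₖ Q).det = ∏ a, (W a a • P - V a a • Q).det := by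
  rw [det_of_blockTriangular_fst ((hW.kronecker_blockTriangular P).sub
    (hV.kronecker_blockTriangular Q))]
  rfl

theorem kronecker_one_mul_sub_mul_kronecker_one {α ι : Type*} [Fintype α] [DecidableEq α]
    [Fintype ι] [DecidableEq ι] (x A B y : Matrix α α R) (g : Matrix ι ι R) :
    (x ⊗ₖ 1) * (A ⊗ₖ 1 - B ⊗ₖ g) * (y ⊗ₖ 1) = (x * A * y) ⊗ₖ 1 - (x * B * y) ⊗ₖ g := by
  simp only [mul_sub, sub_mul, ← mul_kronecker_mul, mul_one, one_mul]

variable (R) in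
def upShift (n : ℕ) : Matrix (Fin n) (Fin n) R :=
  of fun i j => if (j : ℕ) = i + 1 then 1 else 0

def powerLowerTriangular (n : ℕ) (c : R) : Matrix (Fin n) (Fin n) R :=
  of fun i j => if j ≤ i then c ^ ((i : ℕ) - j) else 0

theorem upShift_mul_apply {n : ℕ} {β : Type*} (M : Matrix (Fin n) β R) (i : Fin n) (j : β) :
    (upShift R n * M) i j = if h : (i : ℕ) + 1 < n then M ⟨i + 1, h⟩ j else 0 := by
  rw [mul_apply]
  split_ifs with h
  · rw [Finset.sum_eq_single ⟨i + 1, h⟩ (fun k _ hk => ?_) (by simp)]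
    · simp [upShift]
    · rw [upShift, of_apply, if_neg fun hk' => hk (Fin.ext hk'), zero_mul]
  · refine Finset.sum_eq_zero fun k _ => ?_
    simp only [upShift, of_apply]
    rw [if_neg (by omega), zero_mul]

theorem det_powerLowerTriangular (n : ℕ) (c : R) : (powerLowerTriangular n c).det = 1 := by
  have hL : (powerLowerTriangular n c).IsLowerTriangular := fun i j h => if_neg (not_le.2 h)
  rw [det_of_isLowerTriangular _ hL]
  simp [powerLowerTriangular]

theorem smul_one_sub_upShift_mul_powerLowerTriangular (m : ℕ) (c : R) :
    (c • 1 - upShift R (m + 1)) * powerLowerTriangular (m + 1) c =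
      of fun i j : Fin (m + 1) => if i = Fin.last m then c ^ (m + 1 - j : ℕ)
        else if (j : ℕ) = i + 1 then -1 else 0 := by
  ext i j
  rw [sub_mul, smul_mul, one_mul, sub_apply, smul_apply, upShift_mul_apply]
  simp only [powerLowerTriangular, of_apply, smul_eq_mul, Fin.ext_iff, Fin.val_last,
    Fin.le_iff_val_le_val]
  have := i.isLt
  have := j.isLt
  split_ifs <;> first | omega | skip
  · rw [show (i : ℕ) + 1 - j = i - j + 1 by omega, pow_succ]; ring
  · rw [show m + 1 - (j : ℕ) = i - j + 1 by omega, pow_succ]; ring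
  · rw [show (i : ℕ) + 1 - j = 0 by omega, pow_zero]; ring
  · ring

theorem single_mul_powerLowerTriangular {n : ℕ} (i : Fin (n + 1)) (c : R) :
    single i 0 1 * powerLowerTriangular (n + 1) c = single i 0 1 := by
  ext a b
  by_cases ha : a = i
  · subst ha
    simp [powerLowerTriangular, single_apply, eq_comm]
  · rw [single_mul_apply_of_ne _ _ _ _ _ ha, single_apply_of_row_ne (Ne.symm ha)]

theorem permMatrix_finRotate_symm_mul {m : ℕ} {β : Type*} (M : Matrix (Fin (m + 1)) β R) :
    Equiv.Perm.permMatrix R (finRotate (m + 1)).symm * M =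
      M.submatrix (finRotate (m + 1)).symm id :=
  PEquiv.toMatrix_toPEquiv_mul _ _

theorem permMatrix_mul_smul_one_sub_upShift_mul (m : ℕ) (c : R) :
    Equiv.Perm.permMatrix R (finRotate (m + 1)).symm * (c • 1 - upShift R (m + 1)) *
        powerLowerTriangular (m + 1) c =
      of fun i j : Fin (m + 1) => if i = 0 then c ^ (m + 1 - j : ℕ)
        else if j = i then -1 else 0 := by
  rw [mul_assoc, smul_one_sub_upShift_mul_powerLowerTriangular, permMatrix_finRotate_symm_mul]
  ext i j
  simp only [submatrix_apply, of_apply, id]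
  by_cases hi : i = 0
  · subst hi
    rw [finRotate_symm_zero]
    simp
  · have hσ := finRotate_symm_val hi
    have hi' : (i : ℕ) ≠ 0 := Fin.val_ne_zero_iff.2 hi
    have := i.isLt
    rw [if_neg hi]
    simp only [Fin.ext_iff, Fin.val_last, hσ]
    split_ifs <;> first | rfl | omega

theorem permMatrix_mul_single_mul (m : ℕ) (c : R) :
    Equiv.Perm.permMatrix R (finRotate (m + 1)).symm * single (Fin.last m) 0 1 *
        powerLowerTriangular (m + 1) c = single 0 0 1 := by
  rw [mul_assoc, single_mul_powerLowerTriangular, permMatrix_finRotate_symm_mul]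
  exact (submatrix_single_equiv _ (Equiv.refl _) _ _ _).trans
    (by rw [Equiv.symm_symm, finRotate_last]; rfl)

theorem det_kronecker_one_sub_single_zero_kronecker {ι : Type*} [Fintype ι] [DecidableEq ι]
    (m : ℕ) (g : Matrix ι ι R) (c : R) :
    ((of fun i j : Fin (m + 1) => if i = 0 then c ^ (m + 1 - j : ℕ) else if j = i then -1 else 0)
        ⊗ₖ (1 : Matrix ι ι R) - single 0 0 1 ⊗ₖ g).det =
      (c ^ (m + 1) • 1 - g).det * ((-1) ^ m) ^ Fintype.card ι := by
  have hW : (of fun i j : Fin (m + 1) =>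
      if i = 0 then c ^ (m + 1 - j : ℕ) else if j = i then -1 else 0).IsUpperTriangular := by
    intro i j hij
    have hi : i ≠ 0 := ((Fin.zero_le j).trans_lt hij).ne'
    have hji : j ≠ i := hij.ne
    simp [hi, hji]
  have hE : (single 0 0 1 : Matrix (Fin (m + 1)) (Fin (m + 1)) R).IsUpperTriangular := by
    intro i j hij
    have hi : i ≠ 0 := ((Fin.zero_le j).trans_lt hij).ne'
    simp [hi.symm]
  rw [det_kronecker_sub_kronecker_of_isUpperTriangular hW hE, Fin.prod_univ_succ]
  simp [(Fin.succ_ne_zero _).symm, det_neg, pow_right_comm _ m]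

theorem det_smul_one_sub_upShift_kronecker_add {ι : Type*} [Fintype ι] [DecidableEq ι]
    (m : ℕ) (g : Matrix ι ι R) (c : R) :
    (c • 1 - (upShift R (m + 1) ⊗ₖ 1 + single (Fin.last m) 0 1 ⊗ₖ g)).det =
      (c ^ (m + 1) • 1 - g).det := by
  set P := Equiv.Perm.permMatrix R (finRotate (m + 1)).symm
  have hP : P.det = (-1) ^ m := by
    rw [det_permutation, Equiv.Perm.sign_symm, sign_finRotate]
    simp
  have hform : c • 1 - (upShift R (m + 1) ⊗ₖ 1 + single (Fin.last m) 0 1 ⊗ₖ g) =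
      (c • 1 - upShift R (m + 1)) ⊗ₖ 1 - single (Fin.last m) 0 1 ⊗ₖ g := by
    have : (c • 1 - upShift R (m + 1)) ⊗ₖ (1 : Matrix ι ι R) =
        c • 1 - upShift R (m + 1) ⊗ₖ 1 := by
      rw [eq_sub_iff_add_eq, ← add_kronecker, sub_add_cancel, smul_kronecker, one_kronecker_one]
    rw [this, sub_sub]
  have key : (c • 1 - (upShift R (m + 1) ⊗ₖ 1 + single (Fin.last m) 0 1 ⊗ₖ g)).det *
      ((-1) ^ m) ^ Fintype.card ι = (c ^ (m + 1) • 1 - g).det * ((-1) ^ m) ^ Fintype.card ι := by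
    calc _ = ((P ⊗ₖ 1) * (c • 1 - (upShift R (m + 1) ⊗ₖ 1 + single (Fin.last m) 0 1 ⊗ₖ g)) *
          (powerLowerTriangular (m + 1) c ⊗ₖ 1)).det := by
          simp [det_kronecker, hP, det_powerLowerTriangular, mul_comm]
      _ = _ := by
          rw [hform, kronecker_one_mul_sub_mul_kronecker_one,
            permMatrix_mul_smul_one_sub_upShift_mul, permMatrix_mul_single_mul,
            det_kronecker_one_sub_single_zero_kronecker]
  exact ((isUnit_one.neg.pow m).pow _).mul_right_cancel key

end Matrix

theorem markedCycle_succ (m : ℕ) (g : Matrix (Fin 2) (Fin 2) ℂ) :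
    markedCycle (m + 1) g = upShift ℂ (m + 1) ⊗ₖ 1 + single (Fin.last m) 0 1 ⊗ₖ g := by
  ext ⟨i, a⟩ ⟨j, b⟩
  have := j.isLt
  simp only [markedCycle, upShift, of_apply, Matrix.add_apply, kronecker_apply, single_apply,
    Fin.ext_iff, Fin.val_last, Fin.val_zero]
  split_ifs <;> first | omega | simp

theorem det_markedCycle_sub_smul_one {r : ℕ} (hr : 0 < r) (g : Matrix (Fin 2) (Fin 2) ℂ)
    (c : ℂ) : (markedCycle r g - c • 1).det = (g - c ^ r • 1).det := by
  obtain ⟨m, rfl⟩ := Nat.exists_eq_add_one_of_ne_zero hr.ne'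
  rw [← neg_sub, det_neg, markedCycle_succ, det_smul_one_sub_upShift_kronecker_add,
    ← neg_sub g, det_neg]
  simp only [Fintype.card_prod, Fintype.card_fin, mul_comm _ 2, pow_mul, neg_one_sq, one_pow,
    one_mul]

/-- if `g` is block-diagonal with diagonal blocks the cyclic block
matrices `A_i = markedCycle r_i g_{α_i}`, then
`det(g − λ) = ∏_i det(g_{α_i} − λ^{r_i})`. -/
theorem stmt7 (s : ℕ) (r : Fin s → ℕ) (hr : ∀ i, 1 ≤ r i)
    (gα : Fin s → Matrix (Fin 2) (Fin 2) ℂ) (lam : ℂ) :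
    (Matrix.blockDiagonal' (fun i => markedCycle (r i) (gα i)) - lam • 1).det
      = ∏ i : Fin s, (gα i - (lam ^ (r i)) • 1).det := by
  rw [← blockDiagonal'_one, ← blockDiagonal'_smul, ← blockDiagonal'_sub, det_blockDiagonal']
  exact Finset.prod_congr rfl fun i _ => det_markedCycle_sub_smul_one (hr i) (gα i) lam
end

section
/- Let Γ be a finite subgroup of SL(2,ℂ) and g ∈ Γ ≀ S_N correspond to cycle data (p_r^α) with representatives g_α ∈ Γ. Then g does not have eigenvalue −1 in the 2N-dimensional representation if and only if for every pair (r,α) with p_r^α ≠ 0, at least one of the following holds: (a) g_α ∉ {1, −1}; (b) r is even and g_α = −1; (c) r is odd and g_α = 1. -/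
/-!
An eigenvector of a block-diagonal matrix lives in a single block. On the block of an
`r`-cycle marked by `g`, an eigenvector for `μ` is `(w, μ w, …, μ^(r-1) w)` with
`g w = μ^r w`, so `-1` is an eigenvalue of the block iff `(-1)^r` is an eigenvalue of `g`.
For `g ∈ SL(2, ℂ)` of finite order, eigenvalue `1` forces `g = 1`: then `tr g = 2`, so
`(g - 1)^2 = 0` by Cayley–Hamilton and `g^n = 1 + n (g - 1)`, which equals `1` only if
`g = 1`. Applying this to `-g` shows that eigenvalue `-1` forces `g = -1`.
-/

open Matrix

theorem eq_one_of_isOfFinOrder_of_sub_one_mul_self_eq_zero {K A : Type*} [Field K] [CharZero K]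
    [Ring A] [Module K A] [NoZeroSMulDivisors K A] {x : A} (hx : IsOfFinOrder x)
    (hsq : (x - 1) * (x - 1) = 0) : x = 1 := by
  obtain ⟨n, hn, hxn⟩ := hx.exists_pow_eq_one
  set N := x - 1
  have hpow : ∀ k : ℕ, (1 + N) ^ k = 1 + k • N := by
    intro k
    induction k with
    | zero => simp
    | succ k ih =>
      rw [pow_succ, ih, mul_add, mul_one, add_mul, one_mul, smul_mul_assoc, hsq, smul_zero,
        add_zero, succ_nsmul]
      abel
  have hnN : (n : K) • N = 0 := by
    simpa [N, hxn, Nat.cast_smul_eq_nsmul] using (hpow n).symm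
  rw [← sub_eq_zero]
  exact (smul_eq_zero.mp hnN).resolve_left (Nat.cast_ne_zero.mpr hn.ne')

theorem IsOfFinOrder.neg {M : Type*} [Monoid M] [HasDistribNeg M] {x : M}
    (hx : IsOfFinOrder x) : IsOfFinOrder (-x) := by
  have hneg_one : IsOfFinOrder (-1 : M) := isOfFinOrder_iff_pow_eq_one.mpr ⟨2, two_pos, by simp⟩
  simpa using (Commute.neg_one_left x).isOfFinOrder_mul hneg_one hx

namespace Matrix

section BlockDiagonal

variable {o R : Type*} {m : o → Type*} [Fintype o] [DecidableEq o] [∀ i, Fintype (m i)]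
  [Semiring R] (M : ∀ i, Matrix (m i) (m i) R)

theorem blockDiagonal'_mulVec_apply (v : (Σ i, m i) → R) (i : o) (x : m i) :
    (blockDiagonal' M *ᵥ v) ⟨i, x⟩ = (M i *ᵥ fun y => v ⟨i, y⟩) x := by
  rw [mulVec, dotProduct, ← Finset.univ_sigma_univ, Finset.sum_sigma,
    Fintype.sum_eq_single i fun j hj => by simp [blockDiagonal'_apply_ne M x _ (Ne.symm hj)]]
  simp [mulVec, dotProduct, blockDiagonal'_apply_eq]

theorem blockDiagonal'_mulVec_eq_smul_iff (v : (Σ i, m i) → R) (μ : R) :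
    blockDiagonal' M *ᵥ v = μ • v ↔
      ∀ i, (M i *ᵥ fun y => v ⟨i, y⟩) = μ • fun y => v ⟨i, y⟩ := by
  simp only [funext_iff, Sigma.forall, blockDiagonal'_mulVec_apply, Pi.smul_apply]

theorem exists_blockDiagonal'_mulVec_eq_smul_iff (μ : R) :
    (∃ v, v ≠ 0 ∧ blockDiagonal' M *ᵥ v = μ • v) ↔
      ∃ i, ∃ w, w ≠ 0 ∧ M i *ᵥ w = μ • w := by
  constructor
  · rintro ⟨v, hv0, hv⟩
    obtain ⟨⟨i, x⟩, hx⟩ := Function.ne_iff.mp hv0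
    exact ⟨i, fun y => v ⟨i, y⟩, Function.ne_iff.mpr ⟨x, hx⟩,
      (blockDiagonal'_mulVec_eq_smul_iff M v μ).mp hv i⟩
  · rintro ⟨i, w, hw0, hw⟩
    refine ⟨fun q => Pi.single (M := fun j => m j → R) i w q.1 q.2, fun hv => hw0 ?_, ?_⟩
    · ext x
      simpa using congrFun hv ⟨i, x⟩
    · rw [blockDiagonal'_mulVec_eq_smul_iff]
      intro j
      rcases eq_or_ne j i with rfl | hj
      · simpa using hw
      · simp only [Pi.single_eq_of_ne hj]
        exact (mulVec_zero _).trans (smul_zero μ).symm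

end BlockDiagonal

theorem sub_one_mul_self_eq_zero_of_det_sub_one_eq_zero {R : Type*} [CommRing R]
    {g : Matrix (Fin 2) (Fin 2) R} (hdet : g.det = 1) (hsing : (g - 1).det = 0) :
    (g - 1) * (g - 1) = 0 := by
  rw [det_fin_two] at hdet hsing
  simp only [sub_apply, one_apply_eq, ne_eq, zero_ne_one, not_false_eq_true, one_apply_ne,
    sub_zero, one_ne_zero] at hsing
  have htr : g 0 0 + g 1 1 = 2 := by linear_combination hdet - hsing
  ext i j
  fin_cases i <;> fin_cases j <;>
    simp only [Fin.zero_eta, Fin.mk_one, Fin.isValue, mul_apply, sub_apply, one_apply,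
      Fin.sum_univ_two, ↓reduceIte, zero_ne_one, one_ne_zero, sub_zero, zero_apply]
  · linear_combination g 0 0 * htr - hdet
  · linear_combination g 0 1 * htr
  · linear_combination g 1 0 * htr
  · linear_combination g 1 1 * htr - hdet

variable {K : Type*} [Field K] [CharZero K] {g : Matrix (Fin 2) (Fin 2) K}

theorem eq_one_of_mulVec_eq_self (hdet : g.det = 1) (hg : IsOfFinOrder g) {w : Fin 2 → K}
    (hw0 : w ≠ 0) (hw : g *ᵥ w = w) : g = 1 := by
  have hdet' : (g - 1).det = 0 :=
    exists_mulVec_eq_zero_iff.mp ⟨w, hw0, by rw [sub_mulVec, hw, one_mulVec, sub_self]⟩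
  exact eq_one_of_isOfFinOrder_of_sub_one_mul_self_eq_zero (K := K) hg
    (sub_one_mul_self_eq_zero_of_det_sub_one_eq_zero hdet hdet')

theorem eq_neg_one_of_mulVec_eq_neg (hdet : g.det = 1) (hg : IsOfFinOrder g) {w : Fin 2 → K}
    (hw0 : w ≠ 0) (hw : g *ᵥ w = -w) : g = -1 := by
  rw [← neg_neg g, eq_one_of_mulVec_eq_self (by simp [det_neg, hdet]) hg.neg hw0
    (by rw [neg_mulVec, hw, neg_neg])]

theorem exists_mulVec_eq_self_iff_eq_one (hdet : g.det = 1) (hg : IsOfFinOrder g) :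
    (∃ w : Fin 2 → K, w ≠ 0 ∧ g *ᵥ w = w) ↔ g = 1 :=
  ⟨fun ⟨_, hw0, hw⟩ => eq_one_of_mulVec_eq_self hdet hg hw0 hw,
    fun h => ⟨Pi.single 0 1, by simp, by rw [h, one_mulVec]⟩⟩

theorem exists_mulVec_eq_neg_iff_eq_neg_one (hdet : g.det = 1) (hg : IsOfFinOrder g) :
    (∃ w : Fin 2 → K, w ≠ 0 ∧ g *ᵥ w = -w) ↔ g = -1 :=
  ⟨fun ⟨_, hw0, hw⟩ => eq_neg_one_of_mulVec_eq_neg hdet hg hw0 hw,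
    fun h => ⟨Pi.single 0 1, by simp, by rw [h, neg_mulVec, one_mulVec]⟩⟩

end Matrix

section MarkedCycle

variable {r : ℕ} {g : Matrix (Fin 2) (Fin 2) ℂ} {v : Fin r × Fin 2 → ℂ}

theorem markedCycle_mulVec_of_lt (p : Fin r × Fin 2) (h : (p.1 : ℕ) + 1 < r) :
    (markedCycle r g *ᵥ v) p = v (⟨p.1 + 1, h⟩, p.2) := by
  rw [mulVec, dotProduct, Fintype.sum_eq_single (⟨⟨p.1 + 1, h⟩, p.2⟩ : Fin r × Fin 2)]
  · simp [markedCycle]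
  · rintro ⟨q, b⟩ hqb
    by_cases hq : (q : ℕ) = p.1 + 1
    · have hb : p.2 ≠ b := fun hb => hqb (Prod.ext (Fin.ext hq) hb.symm)
      simp [markedCycle, hq, one_apply_ne hb]
    · simp [markedCycle, hq, show (p.1 : ℕ) ≠ r - 1 by omega]

theorem markedCycle_mulVec_of_eq_sub_one (p : Fin r × Fin 2) (h : (p.1 : ℕ) = r - 1) :
    (markedCycle r g *ᵥ v) p = (g *ᵥ fun b => v (⟨0, p.1.pos⟩, b)) p.2 := by
  rw [mulVec, dotProduct, Fintype.sum_prod_type, Fintype.sum_eq_single (⟨0, p.1.pos⟩ : Fin r)]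
  · simp [markedCycle, h, mulVec, dotProduct]
  · intro q hq
    have hq0 : (q : ℕ) ≠ 0 := fun h0 => hq (Fin.ext h0)
    simp [markedCycle, hq0, show (q : ℕ) ≠ p.1 + 1 by omega]

theorem exists_markedCycle_mulVec_eq_smul_iff (hr : 0 < r) (μ : ℂ) :
    (∃ v, v ≠ 0 ∧ markedCycle r g *ᵥ v = μ • v) ↔
      ∃ w, w ≠ 0 ∧ g *ᵥ w = μ ^ r • w := by
  constructor
  · rintro ⟨v, hv0, hv⟩
    have hpow : ∀ (j : ℕ) (hj : j < r) (a : Fin 2),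
        v (⟨j, hj⟩, a) = μ ^ j * v (⟨0, hr⟩, a) := by
      intro j
      induction j with
      | zero => simp
      | succ k ih =>
        intro hj a
        have hk := markedCycle_mulVec_of_lt (g := g) (v := v) (⟨k, by omega⟩, a) hj
        rw [hv, Pi.smul_apply, smul_eq_mul, ih] at hk
        rw [← hk, pow_succ]
        ring
    refine ⟨fun b => v (⟨0, hr⟩, b), fun hw => hv0 ?_, ?_⟩
    · ext ⟨⟨j, hj⟩, a⟩
      rw [hpow j hj a, congrFun hw a, Pi.zero_apply, mul_zero, Pi.zero_apply]
    · ext a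
      have hlast :=
        markedCycle_mulVec_of_eq_sub_one (g := g) (v := v) (⟨r - 1, by omega⟩, a) rfl
      rw [hv, Pi.smul_apply, smul_eq_mul, hpow] at hlast
      rw [← hlast, Pi.smul_apply, smul_eq_mul, ← mul_assoc, ← pow_succ',
        Nat.sub_add_cancel hr]
  · rintro ⟨w, hw0, hw⟩
    refine ⟨fun p => μ ^ (p.1 : ℕ) * w p.2, fun hv => hw0 ?_, ?_⟩
    · ext a
      simpa using congrFun hv (⟨0, hr⟩, a)
    · ext ⟨⟨j, hj⟩, a⟩
      rcases Nat.lt_or_ge (j + 1) r with h | h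
      · rw [markedCycle_mulVec_of_lt _ h, Pi.smul_apply, smul_eq_mul, pow_succ']
        ring
      · have hj' : j = r - 1 := by omega
        rw [markedCycle_mulVec_of_eq_sub_one _ hj']
        simp only [pow_zero, one_mul, hw, Pi.smul_apply, smul_eq_mul]
        rw [hj', ← mul_assoc, ← pow_succ', Nat.sub_add_cancel hr]

theorem exists_markedCycle_mulVec_eq_neg_iff (hr : 0 < r) (hdet : g.det = 1)
    (hg : IsOfFinOrder g) :
    (∃ v, v ≠ 0 ∧ markedCycle r g *ᵥ v = -v) ↔
      (Even r ∧ g = 1) ∨ (Odd r ∧ g = -1) := by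
  have h := exists_markedCycle_mulVec_eq_smul_iff (g := g) hr (-1)
  simp only [neg_one_smul] at h
  rw [h]
  rcases r.even_or_odd with hr | hr
  · simp only [hr.neg_one_pow, one_smul, exists_mulVec_eq_self_iff_eq_one hdet hg]
    simp [hr, Nat.not_odd_iff_even.mpr hr]
  · simp only [hr.neg_one_pow, neg_one_smul, exists_mulVec_eq_neg_iff_eq_neg_one hdet hg]
    simp [hr, Nat.not_even_iff_odd.mpr hr]

end MarkedCycle

/-- let `Γ` be a finite subgroup of `SL(2,ℂ)` and let
`g ∈ Γ ≀ S_N ⊂ Sp(2N,ℂ)` correspond to cycle data given by cycles `i = 1,…,s`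
of lengths `r i` marked by representatives `gα i ∈ Γ` (the pairs `(r,α)` with
`p_r^α ≠ 0` are exactly the pairs `(r i, gα i)`).  Then `g` has no eigenvalue
`−1` iff for every `i` at least one of the following holds:
(a) `gα i ∉ {1, −1}`; (b) `r i` is even and `gα i = −1`; (c) `r i` is odd and
`gα i = 1`. -/
theorem stmt9 (Γ : Subgroup (Matrix.SpecialLinearGroup (Fin 2) ℂ)) [Finite Γ]
    (s : ℕ) (r : Fin s → ℕ) (hr : ∀ i, 1 ≤ r i) (gα : Fin s → Γ) :
    (¬ ∃ v : (Σ i : Fin s, Fin (r i) × Fin 2) → ℂ, v ≠ 0 ∧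
        (Matrix.blockDiagonal'
          (fun i => markedCycle (r i) ((gα i : Matrix.SpecialLinearGroup (Fin 2) ℂ) :
            Matrix (Fin 2) (Fin 2) ℂ))).mulVec v = -v)
      ↔ ∀ i : Fin s,
          (((gα i : Matrix.SpecialLinearGroup (Fin 2) ℂ) :
              Matrix (Fin 2) (Fin 2) ℂ) ≠ 1 ∧
           ((gα i : Matrix.SpecialLinearGroup (Fin 2) ℂ) :
              Matrix (Fin 2) (Fin 2) ℂ) ≠ -1)
        ∨ (Even (r i) ∧ ((gα i : Matrix.SpecialLinearGroup (Fin 2) ℂ) :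
              Matrix (Fin 2) (Fin 2) ℂ) = -1)
        ∨ (Odd (r i) ∧ ((gα i : Matrix.SpecialLinearGroup (Fin 2) ℂ) :
              Matrix (Fin 2) (Fin 2) ℂ) = 1) := by
  have hfin : ∀ i, IsOfFinOrder ((gα i : Matrix.SpecialLinearGroup (Fin 2) ℂ) :
      Matrix (Fin 2) (Fin 2) ℂ) := fun i =>
    (SpecialLinearGroup.coeMonoidHom.comp Γ.subtype).isOfFinOrder (isOfFinOrder_of_finite (gα i))
  have hblock := exists_blockDiagonal'_mulVec_eq_smul_iff
    (fun i => markedCycle (r i) ((gα i : Matrix.SpecialLinearGroup (Fin 2) ℂ) :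
      Matrix (Fin 2) (Fin 2) ℂ)) (-1 : ℂ)
  simp only [neg_one_smul] at hblock
  rw [hblock, not_exists]
  refine forall_congr' fun i => ?_
  rw [exists_markedCycle_mulVec_eq_neg_iff (hr i)
    (gα i : Matrix.SpecialLinearGroup (Fin 2) ℂ).2 (hfin i)]
  have hne : (1 : Matrix (Fin 2) (Fin 2) ℂ) ≠ -1 := fun h => by
    have h00 := congrFun (congrFun h 0) 0
    norm_num at h00
  grind [Nat.not_even_iff_odd]
end

section
/- Let A be an associative superalgebra containing a Klein operator K (an even element with K² = 1 and Kf = (−1)^{π(f)} fK for all homogeneous f). Then the map sending a trace tr to the functional f ↦ tr(f·K^{1+π(f)}) is a linear isomorphism from the space of traces on A onto the space of supertraces on A. -/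
/-!
Let `φ f = f * K ^ (1 + π f)`, i.e. `φ` multiplies even elements by `K` on the right and fixes odd
ones. Since `K` is even with `K ^ 2 = 1`, `φ` is a linear involution of `A`. For homogeneous `f, g`,
moving `K ^ (1 + π (f g))` past `f` costs the sign `(-1) ^ (π f * (1 + π f + π g)) = (-1) ^ (π f * π g)`,
so `T ↦ T ∘ φ` turns traces into supertraces and back, and it is its own inverse.
-/

/-- The space of traces on an algebra `A`: linear functionals `T` with
`T(ab) = T(ba)`. -/
noncomputable def traceSpace (A : Type*) [Ring A] [Algebra ℂ A] :
    Submodule ℂ (A →ₗ[ℂ] ℂ) where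
  carrier := {T | ∀ a b : A, T (a * b) = T (b * a)}
  add_mem' := by intro x y hx hy a b; simp [hx a b, hy a b]
  zero_mem' := by intro a b; simp
  smul_mem' := by intro c x hx a b; simp [hx a b]

/-- The space of supertraces on a `ℤ/2`-graded algebra `A`: linear functionals
`T` with `T(fg) = (−1)^{π(f)π(g)} T(gf)` for homogeneous `f, g`. -/
noncomputable def supertraceSpace (A : Type*) [Ring A] [Algebra ℂ A]
    (𝒜 : ZMod 2 → Submodule ℂ A) : Submodule ℂ (A →ₗ[ℂ] ℂ) where
  carrier := {T | ∀ (i j : ZMod 2), ∀ f ∈ 𝒜 i, ∀ g ∈ 𝒜 j,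
    T (f * g) = (-1 : ℂ) ^ (i.val * j.val) * T (g * f)}
  add_mem' := by
    intro x y hx hy i j f hf g hg
    simp only [LinearMap.add_apply, hx i j f hf g hg, hy i j f hf g hg]; ring
  zero_mem' := by intro i j f hf g hg; simp
  smul_mem' := by
    intro c x hx i j f hf g hg
    simp only [LinearMap.smul_apply, hx i j f hf g hg, smul_eq_mul]; ring

open DirectSum

theorem Submodule.map_eq_of_involutive {R N : Type*} [Semiring R] [AddCommMonoid N] [Module R N]
    {ψ : N →ₗ[R] N} (hψ : Function.Involutive ψ) {p q : Submodule R N}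
    (hpq : ∀ x ∈ p, ψ x ∈ q) (hqp : ∀ y ∈ q, ψ y ∈ p) : p.map ψ = q :=
  le_antisymm (Submodule.map_le_iff_le_comap.2 hpq) fun y hy => ⟨ψ y, hqp y hy, hψ y⟩

theorem DirectSum.Decomposition.map_mul_comm {ι R A M : Type*} [DecidableEq ι] [CommSemiring R]
    [Semiring A] [Module R A] [AddCommMonoid M] [Module R M]
    (𝒜 : ι → Submodule R A) [Decomposition 𝒜] (T : A →ₗ[R] M)
    (h : ∀ i j, ∀ f ∈ 𝒜 i, ∀ g ∈ 𝒜 j, T (f * g) = T (g * f)) (a b : A) :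
    T (a * b) = T (b * a) := by
  induction a using Decomposition.inductionOn 𝒜 with
  | zero => simp
  | add a a' ha ha' => simp only [add_mul, mul_add, map_add, ha, ha']
  | homogeneous f =>
    induction b using Decomposition.inductionOn 𝒜 with
    | zero => simp
    | add b b' hb hb' => simp only [add_mul, mul_add, map_add, hb, hb']
    | homogeneous g => exact h _ _ f f.2 g g.2

theorem ZMod.neg_one_pow_val_mul_one_add_val_add {M : Type*} [Ring M] (i j : ZMod 2) :
    (-1 : M) ^ (i.val * (1 + (i + j).val)) = (-1) ^ (i.val * j.val) := by
  rw [neg_one_pow_eq_pow_mod_two, neg_one_pow_eq_pow_mod_two (i.val * j.val)]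
  congr 1
  revert i j
  decide

theorem LinearMap.lcomp_involutive {R M N : Type*} [CommSemiring R] [AddCommMonoid M] [Module R M]
    [AddCommMonoid N] [Module R N] {φ : M →ₗ[R] M} (hφ : Function.Involutive φ) :
    Function.Involutive (LinearMap.lcomp R N φ) :=
  fun T => LinearMap.ext fun a => by simp [hφ a]

structure IsKleinOperator {R A : Type*} [CommRing R] [Ring A] [Algebra R A]
    (𝒜 : ZMod 2 → Submodule R A) (K : A) : Prop where
  mem_zero : K ∈ 𝒜 0
  sq_eq_one : K ^ 2 = 1
  mul_eq_neg_one_pow_mul : ∀ i : ZMod 2, ∀ f ∈ 𝒜 i, K * f = (-1 : A) ^ i.val * (f * K)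

section Klein

variable {R A : Type*} [CommRing R] [Ring A] [Algebra R A] {𝒜 : ZMod 2 → Submodule R A} {K : A}

theorem pow_mem_zero [SetLike.GradedMonoid 𝒜] (hK0 : K ∈ 𝒜 0) (n : ℕ) : K ^ n ∈ 𝒜 0 := by
  simpa using SetLike.pow_mem_graded n hK0

theorem mul_pow_mem [SetLike.GradedMonoid 𝒜] (hK0 : K ∈ 𝒜 0) {i : ZMod 2} {f : A}
    (hf : f ∈ 𝒜 i) (n : ℕ) : f * K ^ n ∈ 𝒜 i := by
  simpa using SetLike.mul_mem_graded hf (pow_mem_zero hK0 n)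

theorem IsKleinOperator.pow_mul_of_mem (hK : IsKleinOperator 𝒜 K) {i : ZMod 2} {f : A}
    (hf : f ∈ 𝒜 i) (n : ℕ) : K ^ n * f = (-1 : R) ^ (i.val * n) • (f * K ^ n) := by
  induction n with
  | zero => simp
  | succ n ih =>
    rw [pow_succ', mul_assoc, ih, mul_smul_comm, ← mul_assoc, hK.mul_eq_neg_one_pow_mul i f hf]
    simp [Algebra.smul_def, mul_add, pow_add, mul_assoc]

variable (𝒜 K) [GradedAlgebra 𝒜]

noncomputable def kleinTwist : A →ₗ[R] A :=
  LinearMap.mulRight R K ∘ₗ GradedAlgebra.proj 𝒜 0 + GradedAlgebra.proj 𝒜 1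

variable {𝒜 K}

theorem kleinTwist_of_mem (hK2 : K ^ 2 = 1) {i : ZMod 2} {f : A} (hf : f ∈ 𝒜 i) :
    kleinTwist 𝒜 K f = f * K ^ (1 + i.val) := by
  obtain rfl | rfl : i = 0 ∨ i = 1 := by clear hf; decide +revert
  · simp [kleinTwist, decompose_of_mem_same 𝒜 hf, decompose_of_mem_ne 𝒜 hf zero_ne_one]
  · simp [kleinTwist, decompose_of_mem_same 𝒜 hf, decompose_of_mem_ne 𝒜 hf one_ne_zero,
      ZMod.val_one, hK2]

theorem kleinTwist_involutive (hK0 : K ∈ 𝒜 0) (hK2 : K ^ 2 = 1) :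
    Function.Involutive (kleinTwist 𝒜 K) := by
  intro a
  induction a using Decomposition.inductionOn 𝒜 with
  | zero => simp
  | add a a' ha ha' => rw [map_add, map_add, ha, ha']
  | homogeneous f =>
    obtain ⟨f, hf⟩ := f
    rw [kleinTwist_of_mem hK2 hf, kleinTwist_of_mem hK2 (mul_pow_mem hK0 hf _), mul_assoc,
      ← pow_add, ← two_mul, pow_mul, hK2, one_pow, mul_one]

theorem IsKleinOperator.mul_pow_mul_eq_smul_kleinTwist (hK : IsKleinOperator 𝒜 K) {i j : ZMod 2}
    {f g : A} (hf : f ∈ 𝒜 i) (hg : g ∈ 𝒜 j) :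
    g * K ^ (1 + (i + j).val) * f = (-1 : R) ^ (i.val * j.val) • kleinTwist 𝒜 K (g * f) := by
  rw [mul_assoc, hK.pow_mul_of_mem hf, ZMod.neg_one_pow_val_mul_one_add_val_add, mul_smul_comm,
    ← mul_assoc, kleinTwist_of_mem hK.sq_eq_one (SetLike.mul_mem_graded hg hf), add_comm j i]

end Klein

section Transfer

variable {A : Type*} [Ring A] [Algebra ℂ A] {𝒜 : ZMod 2 → Submodule ℂ A} [GradedAlgebra 𝒜]
  {K : A}

theorem IsKleinOperator.comp_kleinTwist_mem_supertraceSpace (hK : IsKleinOperator 𝒜 K)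
    {T : A →ₗ[ℂ] ℂ} (hT : T ∈ traceSpace A) : T ∘ₗ kleinTwist 𝒜 K ∈ supertraceSpace A 𝒜 := by
  intro i j f hf g hg
  rw [LinearMap.comp_apply, LinearMap.comp_apply, kleinTwist_of_mem hK.sq_eq_one
    (SetLike.mul_mem_graded hf hg), mul_assoc, hT, hK.mul_pow_mul_eq_smul_kleinTwist hf hg,
    map_smul, smul_eq_mul]

theorem IsKleinOperator.comp_kleinTwist_mem_traceSpace (hK : IsKleinOperator 𝒜 K)
    {S : A →ₗ[ℂ] ℂ} (hS : S ∈ supertraceSpace A 𝒜) : S ∘ₗ kleinTwist 𝒜 K ∈ traceSpace A := by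
  refine Decomposition.map_mul_comm 𝒜 _ fun i j f hf g hg => ?_
  rw [LinearMap.comp_apply, LinearMap.comp_apply, kleinTwist_of_mem hK.sq_eq_one
    (SetLike.mul_mem_graded hf hg), mul_assoc, hS i j f hf _ (mul_pow_mem hK.mem_zero hg _),
    hK.mul_pow_mul_eq_smul_kleinTwist hf hg, map_smul, smul_eq_mul, ← mul_assoc, ← mul_pow]
  simp

end Transfer

/-- if a superalgebra `A` contains a Klein operator `K`, then
`tr ↦ (f ↦ tr(f·K^{1+π(f)}))` is a linear isomorphism from the space of traces
on `A` onto the space of supertraces on `A`. -/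
theorem stmt14 (A : Type*) [Ring A] [Algebra ℂ A]
    (𝒜 : ZMod 2 → Submodule ℂ A) [GradedAlgebra 𝒜]
    (K : A) (hK0 : K ∈ 𝒜 0) (hK2 : K ^ 2 = 1)
    (hK : ∀ (i : ZMod 2), ∀ f ∈ 𝒜 i, K * f = (-1 : A) ^ i.val * (f * K)) :
    ∃ e : traceSpace A ≃ₗ[ℂ] supertraceSpace A 𝒜,
      ∀ (T : traceSpace A) (i : ZMod 2), ∀ f ∈ 𝒜 i,
        (e T : A →ₗ[ℂ] ℂ) f = (T : A →ₗ[ℂ] ℂ) (f * K ^ (1 + i.val)) := by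
  have hKlein : IsKleinOperator 𝒜 K := ⟨hK0, hK2, hK⟩
  have hψ := LinearMap.lcomp_involutive (N := ℂ) (kleinTwist_involutive hK0 hK2)
  refine ⟨(LinearEquiv.ofInvolutive _ hψ).ofSubmodules _ _ <|
      Submodule.map_eq_of_involutive hψ (fun _ => hKlein.comp_kleinTwist_mem_supertraceSpace)
        (fun _ => hKlein.comp_kleinTwist_mem_traceSpace), fun T i f hf => ?_⟩
  exact congrArg T.1 (kleinTwist_of_mem hK2 hf)
end
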